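/- Let n ≥ 3, (T, Σ, ⟠) an n-angulated category, A a full subcategory closed under extensions, and let E and F be almost n-exact structures for A. (1) If there are enough E-injective morphisms, then F ⊆ E if and only if E-inj ⊆ F-inj. (2) If there are enough E-projective morphisms, then F ⊆ E if and only if E-proj ⊆ F-proj. -/

import Mathlib

/-!
Common framework: `n`-angulated categories (Geiss–Keller–Oppermann), almost `n`-exact
structures on an extension closed subcategory, ideals, phantom ideals, (special)
precovers/preenvelopes, relative phantoms, pullback/pushout almost `n`-exact structures.
-/

open CategoryTheory CategoryTheory.Limits ZeroObject

universe v u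

namespace IdealApprox

/-- An `n`-`Σ`-sequence `A₁ → A₂ → ⋯ → Aₙ → ΣA₁` in `T`.  The objects are
`obj 0, …, obj (n-1)`; `mor i : obj i ⟶ obj (i+1)` for `i ≤ n - 2` are the structure
morphisms (indices `≥ n - 1` are junk), and `phantom : obj (n-1) ⟶ S.obj (obj 0)`
is the last morphism `αₙ`. -/
structure NSeq (n : ℕ) (T : Type u) [Category.{v} T] (S : T ⥤ T) where
  obj : ℕ → T
  mor : ∀ i : ℕ, obj i ⟶ obj (i + 1)
  phantom : obj (n - 1) ⟶ S.obj (obj 0)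

/-- A morphism of `n`-`Σ`-sequences. -/
structure NSeqHom {n : ℕ} {T : Type u} [Category.{v} T] {S : T ⥤ T}
    (d e : NSeq n T S) where
  app : ∀ i : ℕ, d.obj i ⟶ e.obj i
  comm : ∀ i : ℕ, i + 2 ≤ n → app i ≫ e.mor i = d.mor i ≫ app (i + 1)
  comm_phantom : app (n - 1) ≫ e.phantom = d.phantom ≫ S.map (app 0)

section Defs

variable {n : ℕ} {T : Type u} [Category.{v} T] [Preadditive T] [HasZeroObject T]
  [HasBinaryBiproducts T] {S : T ⥤ T}

/-- The componentwise direct sum of two `n`-`Σ`-sequences. -/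
noncomputable def biprodSeq (d e : NSeq n T S) : NSeq n T S where
  obj i := d.obj i ⊞ e.obj i
  mor i := biprod.map (d.mor i) (e.mor i)
  phantom := biprod.desc (d.phantom ≫ S.map biprod.inl) (e.phantom ≫ S.map biprod.inr)

/-- The trivial `n`-`Σ`-sequence `A = A → 0 → ⋯ → 0 → ΣA`. -/
noncomputable def trivialNSeq (A : T) : NSeq n T S where
  obj i := match i with
    | 0 => A
    | 1 => A
    | _ + 2 => 0
  mor i := match i with
    | 0 => 𝟙 A
    | _ + 1 => 0
  phantom := 0

/-- `e` is the left rotation `A₂ → A₃ → ⋯ → Aₙ → ΣA₁ → ΣA₂` (with last morphism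
`(-1)ⁿ Σα₁`) of `d`. -/
structure IsLeftRotation (d e : NSeq n T S) : Prop where
  hn : 3 ≤ n
  obj_eq : ∀ i : ℕ, i + 2 ≤ n → e.obj i = d.obj (i + 1)
  obj_last : e.obj (n - 1) = S.obj (d.obj 0)
  mor_eq : ∀ (i : ℕ) (h3 : i + 3 ≤ n),
    e.mor i = eqToHom (obj_eq i (by omega)) ≫ d.mor (i + 1) ≫
      eqToHom (obj_eq (i + 1) (by omega)).symm
  mor_last : e.mor (n - 2) =
    eqToHom ((obj_eq (n - 2) (by omega)).trans
        (congrArg d.obj (by omega : n - 2 + 1 = n - 1))) ≫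
      d.phantom ≫
      eqToHom (obj_last.symm.trans (congrArg e.obj (by omega : n - 1 = n - 2 + 1)))
  phantom_eq : e.phantom =
    eqToHom obj_last ≫ ((-1 : ℤ) ^ n • S.map (d.mor 0)) ≫
      eqToHom (congrArg S.obj (obj_eq 0 (by omega)).symm)

/-- `c` is the mapping cone of the morphism `φ : d ⟶ e` of `n`-`Σ`-sequences, i.e.
`c` has objects `A_{i+1} ⊞ B_i` and the matrix morphisms `[(-α, 0), (φ, β)]`. -/
structure IsCone {d e : NSeq n T S} (φ : NSeqHom d e) (c : NSeq n T S) : Prop where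
  hn : 3 ≤ n
  obj_eq : ∀ i : ℕ, i + 2 ≤ n → c.obj i = (d.obj (i + 1) ⊞ e.obj i)
  obj_last : c.obj (n - 1) = (S.obj (d.obj 0) ⊞ e.obj (n - 1))
  mor_eq : ∀ (i : ℕ) (h3 : i + 3 ≤ n),
    c.mor i = eqToHom (obj_eq i (by omega)) ≫
      (biprod.map (-(d.mor (i + 1))) (e.mor i) +
        biprod.fst ≫ φ.app (i + 1) ≫ biprod.inr) ≫
      eqToHom (obj_eq (i + 1) (by omega)).symm
  mor_last : c.mor (n - 2) =
    eqToHom (obj_eq (n - 2) (by omega)) ≫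
      (biprod.map (eqToHom (congrArg d.obj (by omega : n - 2 + 1 = n - 1)) ≫
          (-(d.phantom))) (e.mor (n - 2)) +
        biprod.fst ≫ eqToHom (congrArg d.obj (by omega : n - 2 + 1 = n - 1)) ≫
          φ.app (n - 1) ≫ eqToHom (congrArg e.obj (by omega : n - 1 = n - 2 + 1)) ≫
          biprod.inr) ≫
      eqToHom (show (S.obj (d.obj 0) ⊞ e.obj (n - 2 + 1)) = c.obj (n - 2 + 1) by
        rw [show n - 2 + 1 = n - 1 from by omega]; exact obj_last.symm)
  phantom_eq : c.phantom =
    eqToHom obj_last ≫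
      biprod.desc ((-(S.map (d.mor 0))) ≫ S.map biprod.inl +
          S.map (φ.app 0) ≫ S.map biprod.inr)
        (e.phantom ≫ S.map biprod.inr) ≫
      eqToHom (congrArg S.obj (obj_eq 0 (by omega)).symm)

/-- The axioms (F1)–(F4) for a class `Ang` of `n`-`Σ`-sequences to be an
`n`-angulation of `(T, S)`; the members of `Ang` are the `n`-angles. -/
structure IsNAngulated (Ang : Set (NSeq n T S)) : Prop where
  /-- (F1)(a): closed under direct sums. -/
  biprod_mem : ∀ d e : NSeq n T S, d ∈ Ang → e ∈ Ang → biprodSeq d e ∈ Ang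
  /-- (F1)(a): closed under direct summands. -/
  summand_mem : ∀ d e : NSeq n T S, e ∈ Ang →
    (∃ (f : NSeqHom d e) (g : NSeqHom e d), ∀ i, f.app i ≫ g.app i = 𝟙 (d.obj i)) →
    d ∈ Ang
  /-- (F1)(b): contains the trivial sequences. -/
  trivial_mem : ∀ A : T, (trivialNSeq A : NSeq n T S) ∈ Ang
  /-- (F1)(c): every morphism is the first morphism of some `n`-angle. -/
  complete : ∀ {X Y : T} (f : X ⟶ Y), ∃ d ∈ Ang, ∃ (h0 : d.obj 0 = X) (h1 : d.obj 1 = Y),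
    d.mor 0 = eqToHom h0 ≫ f ≫ eqToHom h1.symm
  /-- (F2): closed under rotation, in both directions. -/
  rotate : ∀ d e : NSeq n T S, IsLeftRotation d e → (d ∈ Ang ↔ e ∈ Ang)
  /-- (F3)+(F4): any commutative square on the first morphisms of two `n`-angles
  extends to a morphism of `n`-angles whose mapping cone is again an `n`-angle. -/
  fill : ∀ d e : NSeq n T S, d ∈ Ang → e ∈ Ang →
    ∀ (f0 : d.obj 0 ⟶ e.obj 0) (f1 : d.obj 1 ⟶ e.obj 1),
      f0 ≫ e.mor 0 = d.mor 0 ≫ f1 →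
      ∃ φ : NSeqHom d e, φ.app 0 = f0 ∧ φ.app 1 = f1 ∧ ∃ c ∈ Ang, IsCone φ c

/-- All (meaningful) objects of the sequence `d` belong to the subcategory `A`. -/
def objsIn (A : Set T) (d : NSeq n T S) : Prop := ∀ i : ℕ, i < n → d.obj i ∈ A

/-- The class `D_A` of `n`-angles all of whose objects lie in `A`. -/
def DA (Ang : Set (NSeq n T S)) (A : Set T) : Set (NSeq n T S) :=
  {d | d ∈ Ang ∧ objsIn A d}

/-- The full subcategory `A` is closed under extensions in `(T, S, Ang)`. -/
def ClosedUnderExtensions (Ang : Set (NSeq n T S)) (A : Set T) : Prop :=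
  ∀ d ∈ Ang, d.obj 0 ∈ A → d.obj (n - 1) ∈ A → objsIn A d

/-- An almost `n`-exact structure `E ⊆ D_A` for `A`: (N1) closed under direct sums and
containing all split `n`-angles, (N2) closed under base change, (N3) closed under
cobase change. -/
structure IsAlmostNExact (Ang : Set (NSeq n T S)) (A : Set T)
    (E : Set (NSeq n T S)) : Prop where
  subset_DA : E ⊆ DA Ang A
  sum_mem : ∀ d e : NSeq n T S, d ∈ E → e ∈ E → biprodSeq d e ∈ E
  split_mem : ∀ d ∈ DA Ang A, d.phantom = 0 → d ∈ E
  base_change : ∀ d ∈ E, ∀ e ∈ DA Ang A, ∀ (φ : NSeqHom e d) (h : e.obj 0 = d.obj 0),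
    φ.app 0 = eqToHom h → e ∈ E
  cobase_change : ∀ d ∈ E, ∀ e ∈ DA Ang A,
    ∀ (φ : NSeqHom d e) (h : d.obj (n - 1) = e.obj (n - 1)),
      φ.app (n - 1) = eqToHom h → e ∈ E

/-- The class `Φ(E)` of `E`-phantoms, i.e. last morphisms of `n`-angles in `E`. -/
def phant (E : Set (NSeq n T S)) : MorphismProperty T := fun X Y f =>
  ∃ d ∈ E, ∃ (hX : d.obj (n - 1) = X) (hY : S.obj (d.obj 0) = Y),
    f = eqToHom hX.symm ≫ d.phantom ≫ eqToHom hY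

/-- `f` is an `E`-inflation, i.e. the first morphism of some `n`-angle in `E`. -/
def IsInfl (E : Set (NSeq n T S)) {X Y : T} (f : X ⟶ Y) : Prop :=
  ∃ d ∈ E, ∃ (h0 : d.obj 0 = X) (h1 : d.obj 1 = Y),
    f = eqToHom h0.symm ≫ d.mor 0 ≫ eqToHom h1

/-- `f` is an `E`-deflation, i.e. the `(n-1)`-st morphism of some `n`-angle in `E`. -/
def IsDefl (E : Set (NSeq n T S)) {X Y : T} (f : X ⟶ Y) : Prop :=
  ∃ d ∈ E, ∃ (h0 : d.obj (n - 2) = X) (h1 : d.obj (n - 2 + 1) = Y),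
    f = eqToHom h0.symm ≫ d.mor (n - 2) ≫ eqToHom h1

/-- The ideal `E-proj` of `E`-projective morphisms of `A`: morphisms factoring
through every `E`-deflation with the appropriate target. -/
def EProj (A : Set T) (E : Set (NSeq n T S)) : MorphismProperty T := fun X Z f =>
  X ∈ A ∧ Z ∈ A ∧ ∀ ⦃P : T⦄ (p : P ⟶ Z), IsDefl E p → ∃ g : X ⟶ P, g ≫ p = f

/-- The ideal `E-inj` of `E`-injective morphisms of `A`: morphisms factoring
through every `E`-inflation with the appropriate source. -/
def EInj (A : Set T) (E : Set (NSeq n T S)) : MorphismProperty T := fun Z Y f =>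
  Z ∈ A ∧ Y ∈ A ∧ ∀ ⦃Q : T⦄ (m : Z ⟶ Q), IsInfl E m → ∃ g : Q ⟶ Y, m ≫ g = f

/-- An ideal in the full subcategory `A`: a class of morphisms of `A` closed under
sums of parallel morphisms and under composition with arbitrary morphisms of `A`. -/
structure IsIdeal (A : Set T) (I : MorphismProperty T) : Prop where
  src_mem : ∀ ⦃X Y : T⦄ (f : X ⟶ Y), I f → X ∈ A
  tgt_mem : ∀ ⦃X Y : T⦄ (f : X ⟶ Y), I f → Y ∈ A
  add_mem : ∀ ⦃X Y : T⦄ (f g : X ⟶ Y), I f → I g → I (f + g)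
  comp_mem : ∀ ⦃W X Y Z : T⦄ (f : W ⟶ X) (i : X ⟶ Y) (g : Y ⟶ Z),
    W ∈ A → Z ∈ A → I i → I (f ≫ i ≫ g)

/-- A phantom `A`-ideal: a class of morphisms `X → ΣB` with `X, B ∈ A`, closed under
sums and under `(Σg) ∘ φ ∘ f` for morphisms `f, g` of `A`. -/
structure IsPhantomIdeal (S : T ⥤ T) (A : Set T) (P : MorphismProperty T) : Prop where
  mem : ∀ ⦃X Y : T⦄ (φ : X ⟶ Y), P φ → X ∈ A ∧ ∃ B ∈ A, Y = S.obj B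
  add_mem : ∀ ⦃X Y : T⦄ (φ ψ : X ⟶ Y), P φ → P ψ → P (φ + ψ)
  comp_mem : ∀ ⦃X' X B B' : T⦄ (f : X' ⟶ X) (φ : X ⟶ S.obj B) (g : B ⟶ B'),
    X' ∈ A → X ∈ A → B ∈ A → B' ∈ A → P φ → P (f ≫ φ ≫ S.map g)

/-- `i` is an `I`-precover (of its target). -/
def IsPrecover (I : MorphismProperty T) {X A₀ : T} (i : X ⟶ A₀) : Prop :=
  I i ∧ ∀ ⦃X' : T⦄ (i' : X' ⟶ A₀), I i' → ∃ g : X' ⟶ X, g ≫ i = i'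

/-- `j` is an `I`-preenvelope (of its source). -/
def IsPreenvelope (I : MorphismProperty T) {B Y : T} (j : B ⟶ Y) : Prop :=
  I j ∧ ∀ ⦃Y' : T⦄ (j' : B ⟶ Y'), I j' → ∃ g : Y ⟶ Y', j ≫ g = j'

/-- The ideal `I` is precovering: every object of `A` has an `I`-precover. -/
def Precovering (A : Set T) (I : MorphismProperty T) : Prop :=
  ∀ A₀ ∈ A, ∃ (X : T) (i : X ⟶ A₀), IsPrecover I i

/-- The ideal `I` is preenveloping: every object of `A` has an `I`-preenvelope. -/
def Preenveloping (A : Set T) (I : MorphismProperty T) : Prop :=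
  ∀ B ∈ A, ∃ (Y : T) (j : B ⟶ Y), IsPreenvelope I j

/-- A phantom `A`-ideal `P` is precovering: every `ΣA₀` (`A₀ ∈ A`) has a `P`-precover. -/
def PhantPrecovering (S : T ⥤ T) (A : Set T) (P : MorphismProperty T) : Prop :=
  ∀ A₀ ∈ A, ∃ (X : T) (φ : X ⟶ S.obj A₀), IsPrecover P φ

/-- A phantom `A`-ideal `P` is preenveloping: every `B ∈ A` has a `P`-preenvelope. -/
def PhantPreenveloping (S : T ⥤ T) (A : Set T) (P : MorphismProperty T) : Prop :=
  ∀ B ∈ A, ∃ (Y : T) (φ : B ⟶ S.obj Y), IsPreenvelope P φ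

/-- There are enough `E`-injective morphisms: every object of `A` admits an
`E`-injective `E`-inflation out of it. -/
def EnoughInjectives (A : Set T) (E : Set (NSeq n T S)) : Prop :=
  ∀ A₀ ∈ A, ∃ (E₀ : T) (e : A₀ ⟶ E₀), IsInfl E e ∧ EInj A E e

/-- There are enough `E`-projective morphisms: every object of `A` admits an
`E`-projective `E`-deflation onto it. -/
def EnoughProjectives (A : Set T) (E : Set (NSeq n T S)) : Prop :=
  ∀ C ∈ A, ∃ (P : T) (p : P ⟶ C), IsDefl E p ∧ EProj A E p

/-- `f ⊥ g` with respect to `E`: `(Σg) φ f = 0` for all `E`-phantoms `φ`. -/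
def OrthRel (E : Set (NSeq n T S)) {X Z B Y : T} (f : X ⟶ Z) (g : B ⟶ Y) : Prop :=
  ∀ φ : Z ⟶ S.obj B, phant E φ → f ≫ φ ≫ S.map g = 0

/-- The right orthogonal ideal `M^⊥` (with respect to `E`) of a class of morphisms. -/
def perpRight (A : Set T) (E : Set (NSeq n T S)) (M : MorphismProperty T) :
    MorphismProperty T := fun B Y g =>
  B ∈ A ∧ Y ∈ A ∧ ∀ ⦃X Z : T⦄ (m : X ⟶ Z), M m → OrthRel E m g

/-- The left orthogonal ideal `⊥M` (with respect to `E`) of a class of morphisms. -/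
def perpLeft (A : Set T) (E : Set (NSeq n T S)) (M : MorphismProperty T) :
    MorphismProperty T := fun X Z f =>
  X ∈ A ∧ Z ∈ A ∧ ∀ ⦃B Y : T⦄ (m : B ⟶ Y), M m → OrthRel E f m

/-- `i : X ⟶ A₀` is a special `I`-precover with respect to `E`. -/
def IsSpecialPrecover (A : Set T) (E : Set (NSeq n T S)) (I : MorphismProperty T)
    {X A₀ : T} (i : X ⟶ A₀) : Prop :=
  I i ∧ ∃ d ∈ E, ∃ (hX : d.obj (n - 2) = X) (hA : d.obj (n - 2 + 1) = A₀),
    i = eqToHom hX.symm ≫ d.mor (n - 2) ≫ eqToHom hA ∧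
    ∃ (B : T) (φ : d.obj (n - 1) ⟶ S.obj B) (j : B ⟶ d.obj 0),
      phant E φ ∧ perpRight A E I j ∧ d.phantom = φ ≫ S.map j

/-- `j : B₀ ⟶ Y` is a special `J`-preenvelope with respect to `E`. -/
def IsSpecialPreenvelope (A : Set T) (E : Set (NSeq n T S)) (J : MorphismProperty T)
    {B₀ Y : T} (j : B₀ ⟶ Y) : Prop :=
  J j ∧ ∃ d ∈ E, ∃ (hB : d.obj 0 = B₀) (hY : d.obj 1 = Y),
    j = eqToHom hB.symm ≫ d.mor 0 ≫ eqToHom hY ∧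
    ∃ (C : T) (i : d.obj (n - 1) ⟶ C) (φ : C ⟶ S.obj (d.obj 0)),
      perpLeft A E J i ∧ phant E φ ∧ d.phantom = i ≫ φ

/-- The ideal `I` is special precovering with respect to `E`. -/
def SpecialPrecovering (A : Set T) (E : Set (NSeq n T S))
    (I : MorphismProperty T) : Prop :=
  ∀ A₀ ∈ A, ∃ (X : T) (i : X ⟶ A₀), IsSpecialPrecover A E I i

/-- The ideal `J` is special preenveloping with respect to `E`. -/
def SpecialPreenveloping (A : Set T) (E : Set (NSeq n T S))
    (J : MorphismProperty T) : Prop :=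
  ∀ B ∈ A, ∃ (Y : T) (j : B ⟶ Y), IsSpecialPreenvelope A E J j

/-- `(I, J)` is an ideal cotorsion pair with respect to `E`: `J = I^⊥` and `I = ⊥J`. -/
def IsIdealCotorsionPair (A : Set T) (E : Set (NSeq n T S))
    (I J : MorphismProperty T) : Prop :=
  J = perpRight A E I ∧ I = perpLeft A E J

/-- The ideal `Φ_E(F)` of `F`-phantoms relative to `E`. -/
def relPhant (A : Set T) (E F : Set (NSeq n T S)) : MorphismProperty T := fun X Z f =>
  X ∈ A ∧ Z ∈ A ∧ ∀ ⦃B : T⦄ (h : Z ⟶ S.obj B), phant E h → phant F (f ≫ h)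

/-- The ideal `Φ^E(F)` of `F`-cophantoms relative to `E`. -/
def relCophant (A : Set T) (E F : Set (NSeq n T S)) : MorphismProperty T := fun Z Y f =>
  Z ∈ A ∧ Y ∈ A ∧ ∀ ⦃W : T⦄ (h : W ⟶ Z), phant E (S.map h) → phant F (S.map (h ≫ f))

/-- The pullback almost `n`-exact structure `PB_E(I)` associated to an ideal `I`:
`n`-angles in `E` whose phantom factors as `ψ ∘ i` with `i ∈ I`, `ψ ∈ Φ(E)`. -/
def PB (E : Set (NSeq n T S)) (I : MorphismProperty T) : Set (NSeq n T S) :=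
  {d | d ∈ E ∧ ∃ (C : T) (i : d.obj (n - 1) ⟶ C) (ψ : C ⟶ S.obj (d.obj 0)),
    I i ∧ phant E ψ ∧ d.phantom = i ≫ ψ}

/-- The pushout almost `n`-exact structure `PO_E(J)` associated to an ideal `J`:
`n`-angles in `E` whose phantom factors as `(Σj) ∘ ψ` with `j ∈ J`, `ψ ∈ Φ(E)`. -/
def PO (E : Set (NSeq n T S)) (J : MorphismProperty T) : Set (NSeq n T S) :=
  {d | d ∈ E ∧ ∃ (B : T) (ψ : d.obj (n - 1) ⟶ S.obj B) (j : B ⟶ d.obj 0),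
    phant E ψ ∧ J j ∧ d.phantom = ψ ≫ S.map j}

/-- `E^I`: the `n`-angles from `A` whose phantom `φ` satisfies `(Σi) φ = 0` for
all `i ∈ I`. -/
def EUp (Ang : Set (NSeq n T S)) (A : Set T) (I : MorphismProperty T) :
    Set (NSeq n T S) :=
  {d | d ∈ DA Ang A ∧ ∀ ⦃Y : T⦄ (i : d.obj 0 ⟶ Y), I i → d.phantom ≫ S.map i = 0}

/-- `E_I`: the `n`-angles from `A` whose phantom `φ` satisfies `φ i = 0` for
all `i ∈ I`. -/
def EDown (Ang : Set (NSeq n T S)) (A : Set T) (I : MorphismProperty T) :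
    Set (NSeq n T S) :=
  {d | d ∈ DA Ang A ∧ ∀ ⦃X : T⦄ (i : X ⟶ d.obj (n - 1)), I i → i ≫ d.phantom = 0}

/-- `D_A(P)`: the `n`-angles from `A` whose phantom lies in `P`. -/
def DAI (Ang : Set (NSeq n T S)) (A : Set T) (P : MorphismProperty T) :
    Set (NSeq n T S) :=
  {d | d ∈ DA Ang A ∧ P d.phantom}

/-- `e : A₀ ⟶ E₀` is a special `H`-injective morphism with respect to `E`: it is
`H`-injective and embeds as the first morphism of an `n`-angle from `A` admitting a
morphism of `n`-angles, with identity ends, to an `n`-angle in `E` whose component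
at position `n` lies in `Φ_E(H)`. -/
def IsSpecialInj (Ang : Set (NSeq n T S)) (A : Set T) (E H : Set (NSeq n T S))
    {A₀ E₀ : T} (e : A₀ ⟶ E₀) : Prop :=
  EInj A H e ∧ ∃ d' ∈ DA Ang A, ∃ (h0 : d'.obj 0 = A₀) (h1 : d'.obj 1 = E₀),
    e = eqToHom h0.symm ≫ d'.mor 0 ≫ eqToHom h1 ∧
    ∃ d ∈ E, ∃ (φ : NSeqHom d' d) (hh : d'.obj 0 = d.obj 0),
      φ.app 0 = eqToHom hh ∧ relPhant A E H (φ.app (n - 1))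

/-- `p : P₀ ⟶ C` is a special `H`-projective morphism with respect to `E` (dual of
`IsSpecialInj`). -/
def IsSpecialProj (Ang : Set (NSeq n T S)) (A : Set T) (E H : Set (NSeq n T S))
    {P₀ C : T} (p : P₀ ⟶ C) : Prop :=
  EProj A H p ∧ ∃ d' ∈ DA Ang A, ∃ (h0 : d'.obj (n - 2) = P₀) (h1 : d'.obj (n - 2 + 1) = C),
    p = eqToHom h0.symm ≫ d'.mor (n - 2) ≫ eqToHom h1 ∧
    ∃ d ∈ E, ∃ (φ : NSeqHom d d') (hh : d.obj (n - 1) = d'.obj (n - 1)),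
      φ.app (n - 1) = eqToHom hh ∧ relCophant A E H (φ.app 0)

/-- There are enough special `H`-injective morphisms (with respect to `E`). -/
def EnoughSpecialInj (Ang : Set (NSeq n T S)) (A : Set T)
    (E H : Set (NSeq n T S)) : Prop :=
  ∀ A₀ ∈ A, ∃ (E₀ : T) (e : A₀ ⟶ E₀), IsSpecialInj Ang A E H e

/-- There are enough special `H`-projective morphisms (with respect to `E`). -/
def EnoughSpecialProj (Ang : Set (NSeq n T S)) (A : Set T)
    (E H : Set (NSeq n T S)) : Prop :=
  ∀ C ∈ A, ∃ (P₀ : T) (p : P₀ ⟶ C), IsSpecialProj Ang A E H p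

end Defs

end IdealApprox

/-! `F ⊆ E` gives `E-inj ⊆ F-inj` and `E-proj ⊆ F-proj` at once. Conversely, let `d ∈ F` and
let `e` be an `E`-injective `E`-inflation out of its first object. Being `F`-injective, `e`
factors through the first morphism of `d`, so (F3) yields a morphism of `n`-angles from `d` to
the `E`-angle of `e` which is the identity on the first object: `d` is a base change of an
`E`-angle, hence lies in `E`. The projective case is dual, but the commutative square now sits
at the last two objects; rotating both `n`-angles `n - 2` times moves it to the front, and since
`Σ` is full and faithful each morphism of rotated `n`-angles rotates back. -/

namespace IdealApprox

theorem NSeqHom.app_congr {n : ℕ} {T : Type u} [Category.{v} T] {S : T ⥤ T}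
    {d e : NSeq n T S} (φ : NSeqHom d e) {i j : ℕ} (h : i = j) :
    φ.app i = eqToHom (congrArg d.obj h) ≫ φ.app j ≫ eqToHom (congrArg e.obj h).symm := by
  subst h
  simp

section Rotation

variable {n : ℕ} {T : Type u} [Category.{v} T] [Preadditive T] {S : T ⥤ T}

noncomputable def NSeq.rotate (hn : 3 ≤ n) (d : NSeq n T S) : NSeq n T S where
  obj i := if i + 2 ≤ n then d.obj (i + 1) else S.obj (d.obj 0)
  mor i :=
    if h : i + 3 ≤ n then
      eqToHom (if_pos (by omega)) ≫ d.mor (i + 1) ≫ eqToHom (if_pos (by omega)).symm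
    else if h' : i + 2 = n then
      eqToHom ((if_pos (by omega)).trans (congrArg d.obj (by omega))) ≫ d.phantom ≫
        eqToHom (if_neg (by omega)).symm
    else 0
  phantom := eqToHom (if_neg (by omega)) ≫ ((-1 : ℤ) ^ n • S.map (d.mor 0)) ≫
    eqToHom (congrArg S.obj (if_pos (by omega)).symm)

theorem NSeq.isLeftRotation_rotate (hn : 3 ≤ n) (d : NSeq n T S) :
    IsLeftRotation d (d.rotate hn) where
  hn := hn
  obj_eq _ h := if_pos h
  obj_last := if_neg (by omega)
  mor_eq _ h := dif_pos h
  mor_last := (dif_neg (by omega)).trans (dif_pos (by omega))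
  phantom_eq := rfl

variable [S.Full] {d d' e e' : NSeq n T S} (hd : IsLeftRotation d e)
  (hd' : IsLeftRotation d' e') (ψ : NSeqHom e' e)

noncomputable def unrotateApp : ∀ i : ℕ, d'.obj i ⟶ d.obj i
  | 0 => S.preimage (eqToHom hd'.obj_last.symm ≫ ψ.app (n - 1) ≫ eqToHom hd.obj_last)
  | i + 1 =>
    if h : i + 2 ≤ n then eqToHom (hd'.obj_eq i h).symm ≫ ψ.app i ≫ eqToHom (hd.obj_eq i h)
    else 0

theorem unrotateApp_of_eq_succ {i j : ℕ} (hj : j = i + 1) (h : i + 2 ≤ n) :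
    unrotateApp hd hd' ψ j =
      eqToHom (hj ▸ hd'.obj_eq i h).symm ≫ ψ.app i ≫ eqToHom (hj ▸ hd.obj_eq i h) := by
  subst hj
  exact dif_pos h

theorem unrotateApp_comm_phantom :
    unrotateApp hd hd' ψ (n - 1) ≫ d.phantom = d'.phantom ≫ S.map (unrotateApp hd hd' ψ 0) := by
  have hn := hd.hn
  have hc := ψ.comm (n - 2) (by omega)
  rw [hd.mor_last, hd'.mor_last, ψ.app_congr (by omega : n - 2 + 1 = n - 1)] at hc
  rw [unrotateApp_of_eq_succ hd hd' ψ (by omega : n - 1 = n - 2 + 1) (by omega)]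
  simp only [unrotateApp, Functor.map_preimage, Category.assoc]
  simpa using eqToHom ((congrArg d'.obj (by omega : n - 1 = n - 2 + 1)).trans
    (hd'.obj_eq (n - 2) (by omega)).symm) ≫= hc =≫
    eqToHom ((congrArg e.obj (by omega : n - 2 + 1 = n - 1)).trans hd.obj_last)

variable [S.Faithful]

theorem unrotateApp_comm (i : ℕ) (hi : i + 2 ≤ n) :
    unrotateApp hd hd' ψ i ≫ d.mor i = d'.mor i ≫ unrotateApp hd hd' ψ (i + 1) := by
  rcases i with _ | i
  · apply S.map_injective
    have hc := ψ.comm_phantom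
    rw [hd.phantom_eq, hd'.phantom_eq] at hc
    simp only [Preadditive.comp_zsmul, Preadditive.zsmul_comp] at hc
    replace hc := ((isUnit_neg_one.pow n).smul_left_cancel).mp hc
    rw [unrotateApp_of_eq_succ hd hd' ψ rfl hi]
    simp only [unrotateApp, Functor.map_comp, Functor.map_preimage, eqToHom_map, Category.assoc]
    simpa using eqToHom hd'.obj_last.symm ≫= hc =≫ eqToHom (congrArg S.obj (hd.obj_eq 0 hi))
  · have hc := ψ.comm i (by omega)
    rw [hd.mor_eq i hi, hd'.mor_eq i hi] at hc
    rw [unrotateApp_of_eq_succ hd hd' ψ rfl (by omega),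
      unrotateApp_of_eq_succ hd hd' ψ rfl hi]
    simpa using eqToHom (hd'.obj_eq i (by omega)).symm ≫= hc =≫ eqToHom (hd.obj_eq (i + 1) hi)

noncomputable def NSeqHom.unrotate : NSeqHom d' d where
  app := unrotateApp hd hd' ψ
  comm := unrotateApp_comm hd hd' ψ
  comm_phantom := unrotateApp_comm_phantom hd hd' ψ

end Rotation

section Angulated

variable {n : ℕ} {T : Type u} [Category.{v} T] [Preadditive T] [HasZeroObject T]
  [HasBinaryBiproducts T] {S : T ⥤ T} {Ang : Set (NSeq n T S)}

theorem IsNAngulated.exists_nSeqHom_of_comm [S.Full] [S.Faithful] (hAng : IsNAngulated Ang)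
    {k : ℕ} (hk : k + 2 ≤ n) {d' d : NSeq n T S} (hd' : d' ∈ Ang) (hd : d ∈ Ang)
    (f : d'.obj k ⟶ d.obj k) (g : d'.obj (k + 1) ⟶ d.obj (k + 1))
    (w : f ≫ d.mor k = d'.mor k ≫ g) :
    ∃ φ : NSeqHom d' d, φ.app k = f ∧ φ.app (k + 1) = g := by
  induction k generalizing d' d with
  | zero =>
    obtain ⟨φ, hφf, hφg, -⟩ := hAng.fill d' d hd' hd f g w
    exact ⟨φ, hφf, hφg⟩
  | succ k ih =>
    have hn : 3 ≤ n := by omega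
    have hr := d.isLeftRotation_rotate hn
    have hr' := d'.isLeftRotation_rotate hn
    obtain ⟨ψ, hψf, hψg⟩ := ih (by omega) ((hAng.rotate _ _ hr').mp hd')
      ((hAng.rotate _ _ hr).mp hd)
      (eqToHom (hr'.obj_eq k (by omega)) ≫ f ≫ eqToHom (hr.obj_eq k (by omega)).symm)
      (eqToHom (hr'.obj_eq (k + 1) hk) ≫ g ≫ eqToHom (hr.obj_eq (k + 1) hk).symm)
      (by simp [hr.mor_eq k hk, hr'.mor_eq k hk, reassoc_of% w])
    refine ⟨ψ.unrotate hr hr', ?_, ?_⟩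
    · change unrotateApp hr hr' ψ (k + 1) = f
      rw [unrotateApp_of_eq_succ hr hr' ψ rfl (by omega), hψf]
      simp
    · change unrotateApp hr hr' ψ (k + 1 + 1) = g
      rw [unrotateApp_of_eq_succ hr hr' ψ rfl hk, hψg]
      simp

end Angulated

section AlmostExact

variable {n : ℕ} {T : Type u} [Category.{v} T] {S : T ⥤ T} {A : Set T}
  {E F : Set (NSeq n T S)}

theorem IsInfl.mono (hFE : F ⊆ E) {X Y : T} {f : X ⟶ Y} (hf : IsInfl F f) : IsInfl E f :=
  let ⟨d, hd, rest⟩ := hf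
  ⟨d, hFE hd, rest⟩

theorem IsDefl.mono (hFE : F ⊆ E) {X Y : T} {f : X ⟶ Y} (hf : IsDefl F f) : IsDefl E f :=
  let ⟨d, hd, rest⟩ := hf
  ⟨d, hFE hd, rest⟩

theorem eInj_le_eInj (hFE : F ⊆ E) : EInj A E ≤ EInj A F :=
  fun _ _ _ ⟨hZ, hY, hf⟩ => ⟨hZ, hY, fun _ m hm => hf m (hm.mono hFE)⟩

theorem eProj_le_eProj (hFE : F ⊆ E) : EProj A E ≤ EProj A F :=
  fun _ _ _ ⟨hX, hZ, hf⟩ => ⟨hX, hZ, fun _ p hp => hf p (hp.mono hFE)⟩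

variable [Preadditive T] [HasZeroObject T] [HasBinaryBiproducts T] {Ang : Set (NSeq n T S)}

theorem subset_of_eInj_le (hn : 0 < n) (hAng : IsNAngulated Ang)
    (hE : IsAlmostNExact Ang A E) (hF : IsAlmostNExact Ang A F) (hEI : EnoughInjectives A E)
    (hle : EInj A E ≤ EInj A F) : F ⊆ E := by
  intro d hdF
  have hdDA := hF.subset_DA hdF
  obtain ⟨E₀, e, ⟨d', hd'E, h0, h1, rfl⟩, hinj⟩ := hEI (d.obj 0) (hdDA.2 0 hn)
  obtain ⟨g, hg⟩ := (hle _ hinj).2.2 (d.mor 0) ⟨d, hdF, rfl, rfl, by simp⟩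
  obtain ⟨φ, hφ, -, -⟩ := hAng.fill d d' hdDA.1 (hE.subset_DA hd'E).1
    (eqToHom h0.symm) (g ≫ eqToHom h1.symm) (by simp [reassoc_of% hg])
  exact hE.base_change d' hd'E d hdDA φ h0.symm hφ

theorem subset_of_eProj_le [S.Full] [S.Faithful] (hn : 2 ≤ n) (hAng : IsNAngulated Ang)
    (hE : IsAlmostNExact Ang A E) (hF : IsAlmostNExact Ang A F) (hEP : EnoughProjectives A E)
    (hle : EProj A E ≤ EProj A F) : F ⊆ E := by
  intro d hdF
  have hdDA := hF.subset_DA hdF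
  obtain ⟨P, p, ⟨d', hd'E, h0, h1, rfl⟩, hproj⟩ :=
    hEP (d.obj (n - 2 + 1)) (hdDA.2 _ (by omega))
  obtain ⟨g, hg⟩ := (hle _ hproj).2.2 (d.mor (n - 2)) ⟨d, hdF, rfl, rfl, by simp⟩
  obtain ⟨φ, -, hφ⟩ := hAng.exists_nSeqHom_of_comm (by omega) (hE.subset_DA hd'E).1 hdDA.1
    (eqToHom h0 ≫ g) (eqToHom h1) (by simp [hg])
  have hlast : d'.obj (n - 1) = d.obj (n - 1) := by
    rw [show n - 1 = n - 2 + 1 by omega]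
    exact h1
  refine hE.cobase_change d' hd'E d hdDA φ hlast ?_
  rw [φ.app_congr (by omega : n - 1 = n - 2 + 1), hφ]
  simp

end AlmostExact

end IdealApprox

open IdealApprox

theorem stmt_13_general {T : Type u} [Category.{v} T] [Preadditive T] [HasZeroObject T]
    [HasBinaryBiproducts T] (S : T ⥤ T) [S.IsEquivalence] {n : ℕ} (hn : 3 ≤ n)
    (Ang : Set (NSeq n T S)) (hAng : IsNAngulated Ang)
    (A : Set T)
    (E : Set (NSeq n T S)) (hE : IsAlmostNExact Ang A E)
    (F : Set (NSeq n T S)) (hF : IsAlmostNExact Ang A F) :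
    (EnoughInjectives A E → (F ⊆ E ↔ EInj A E ≤ EInj A F)) ∧
    (EnoughProjectives A E → (F ⊆ E ↔ EProj A E ≤ EProj A F)) :=
  ⟨fun hEI => ⟨eInj_le_eInj, subset_of_eInj_le (by omega) hAng hE hF hEI⟩,
    fun hEP => ⟨eProj_le_eProj, subset_of_eProj_le (by omega) hAng hE hF hEP⟩⟩

/-- Comparison of almost `n`-exact structures via their injectives/projectives. -/
theorem stmt_13 {T : Type u} [Category.{v} T] [Preadditive T] [HasZeroObject T]
    [HasBinaryBiproducts T] (S : T ⥤ T) [S.IsEquivalence] {n : ℕ} (hn : 3 ≤ n)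
    (Ang : Set (NSeq n T S)) (hAng : IsNAngulated Ang)
    (A : Set T) (hA : ClosedUnderExtensions Ang A)
    (E : Set (NSeq n T S)) (hE : IsAlmostNExact Ang A E)
    (F : Set (NSeq n T S)) (hF : IsAlmostNExact Ang A F) :
    (EnoughInjectives A E → (F ⊆ E ↔ EInj A E ≤ EInj A F)) ∧
    (EnoughProjectives A E → (F ⊆ E ↔ EProj A E ≤ EProj A F)) :=
  stmt_13_general S hn Ang hAng A E hE F hF
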